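/- Consider the classical birth-death Markov generator on {1,...,n}: (L_cl f)(x) = (1/2)x(n-x)[f(x+1)-f(x)] + (1/2)(x-1)(n-x+1)[f(x-1)-f(x)]. The polynomials γ^{(i)}(x) = c_i Σ_{j=0}^i (-1)^{i-j} C(i,j) C(x-1,j) C(n-x,i-j) (for any normalization constants c_i ≠ 0), i = 0,...,n-1, satisfy -L_cl γ^{(i)} = (i(i+1)/2) γ^{(i)}, and ℂⁿ = ⊕_{i=0}^{n-1} ℂγ^{(i)}. In particular L_cl is reversible with respect to the uniform probability on {1,...,n}, and the spectrum of -L_cl is {i(i+1)/2 : 0 ≤ i ≤ n-1}. -/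

import Mathlib

noncomputable section

/-- The birth-death generator
`(L_cl f)(x) = (1/2)x(n-x)[f(x+1)-f(x)] + (1/2)(x-1)(n-x+1)[f(x-1)-f(x)]`
on `{1,...,n}` (boundary coefficients vanish at `x = 1` and `x = n`). -/
noncomputable def Lcl (n : ℕ) (f : ℕ → ℂ) (x : ℕ) : ℂ :=
  (1/2 : ℂ) * x * ((n : ℂ) - x) * (f (x + 1) - f x)
    + (1/2 : ℂ) * ((x : ℂ) - 1) * ((n : ℂ) - x + 1) * (f (x - 1) - f x)

/-- The (unnormalized) discrete Chebyshev polynomial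
`γ⁽ⁱ⁾(x) = Σ_{j=0}^i (-1)^{i-j} C(i,j) C(x-1,j) C(n-x,i-j)`. -/
noncomputable def gamP (n i x : ℕ) : ℂ :=
  ∑ j ∈ Finset.range (i + 1),
    (-1 : ℂ) ^ (i - j) * (i.choose j) * ((x - 1).choose j) * ((n - x).choose (i - j))

/-!
In the coordinates `u = x - 1`, `v = n - x`, the generator `2 L_cl` sends `C(u, j) C(v, k)` to a
combination of the three products `C(u, j') C(v, k')` with `j' + k' = j + k` and `|j' - j| ≤ 1`, so it
acts on each line `j + k = i` by a tridiagonal matrix. The coefficients `(-1)^k C(i, j)` of `γ⁽ⁱ⁾` form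
a left eigenvector of that matrix for the eigenvalue `-i(i+1)`. Hence the `γ⁽ⁱ⁾`, `i < n`, are
eigenvectors of `L_cl` on `ℂⁿ` with distinct eigenvalues, so they form a basis, and then every
eigenvalue of `L_cl` is one of theirs. Reversibility is summation by parts: `∑ φ L_cl ψ` equals the
symmetric Dirichlet form `-½ ∑ₖ k(n-k) (φ(k+1) - φ(k)) (ψ(k+1) - ψ(k))`.
-/

open Finset

section

variable {R : Type*} [CommRing R]

theorem Nat.cast_choose_succ_right_eq (m k : ℕ) :
    (m.choose (k + 1) : R) * (k + 1) = m.choose k * ((m : R) - k) := by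
  rcases le_or_gt k m with h | h
  · have := congrArg (Nat.cast : ℕ → R) (Nat.choose_succ_right_eq m k)
    push_cast [Nat.cast_sub h] at this
    exact this
  · simp [Nat.choose_eq_zero_of_lt h, Nat.choose_eq_zero_of_lt (h.trans k.lt_succ_self)]

theorem Nat.cast_mul_choose_pred (m k : ℕ) :
    (m : R) * (m - 1).choose k = (k + 1) * m.choose (k + 1) := by
  rcases m with _ | m
  · simp
  · have := congrArg (Nat.cast : ℕ → R) (Nat.add_one_mul_choose_eq m k)
    push_cast at this
    simpa [mul_comm] using this

theorem Nat.cast_succ_mul_choose (m j : ℕ) :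
    ((m : R) + 1) * (m + 1).choose j = (m + 1 + j) * m.choose j + j * m.choose (j - 1) := by
  rcases j with _ | j
  · simp
  · have := Nat.cast_choose_succ_right_eq (R := R) m j
    push_cast [Nat.choose_succ_succ, Nat.add_sub_cancel]
    linear_combination -this

end

theorem Module.End.exists_eq_of_hasEigenvalue_of_span_eq_top {K V ι : Type*} [Field K]
    [AddCommGroup V] [Module K V] {f : Module.End K V} {v : ι → V} {e : ι → K}
    (hv : ∀ i, f (v i) = e i • v i) (hspan : Submodule.span K (Set.range v) = ⊤) {μ : K}
    (hμ : f.HasEigenvalue μ) : ∃ i, e i = μ := by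
  by_contra! hne
  have hle : ⊤ ≤ ⨆ (ν) (_ : ν ≠ μ), f.eigenspace ν := by
    rw [← hspan, Submodule.span_le]
    rintro _ ⟨i, rfl⟩
    exact Submodule.mem_iSup_of_mem (e i)
      (Submodule.mem_iSup_of_mem (hne i) (Module.End.mem_eigenspace_iff.mpr (hv i)))
  have hdisj := f.eigenspaces_iSupIndep μ
  rw [top_le_iff.mp hle, disjoint_top] at hdisj
  exact hμ hdisj

theorem sum_Icc_one_eq_sum_range {M : Type*} [AddCommMonoid M] (n : ℕ) (g : ℕ → M) :
    ∑ x ∈ Icc 1 n, g x = ∑ k ∈ range n, g (k + 1) := by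
  rw [range_eq_Ico, sum_Ico_add' g 0 n 1, zero_add, Ico_add_one_right_eq_Icc]

theorem injective_neg_mul_succ_div_two :
    Function.Injective fun i : ℕ => -((i : ℂ) * (i + 1) / 2) := by
  have hmono : StrictMono fun i : ℕ => i * (i + 1) := fun a b h => Nat.mul_lt_mul'' h (by omega)
  intro a b hab
  apply hmono.injective
  simp only [neg_inj, div_left_inj' (two_ne_zero' ℂ)] at hab
  exact_mod_cast hab

namespace BirthDeath

section

variable {R : Type*} [CommRing R]

variable (R) in
def chebCoeff (i : ℕ) (p : ℕ × ℕ) : R := (-1) ^ p.2 * i.choose p.1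

theorem chebCoeff_succ_fst_mul {m : ℕ} {p : ℕ × ℕ} (hp : p ∈ antidiagonal m) :
    chebCoeff R (m + 1) (p.1 + 1, p.2) * (p.1 + 1) =
      -(chebCoeff R (m + 1) (p.1, p.2 + 1) * (p.2 + 1)) := by
  rw [HasAntidiagonal.mem_antidiagonal] at hp
  have h := Nat.cast_choose_succ_right_eq (R := R) (m + 1) p.1
  rw [show ((m + 1 : ℕ) : R) - p.1 = p.2 + 1 by rw [← hp]; push_cast; ring] at h
  simp only [chebCoeff, pow_succ]
  linear_combination (-1 : R) ^ p.2 * h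

theorem sum_antidiagonal_chebCoeff_mul_shift_fst (i : ℕ) (E : ℕ → ℕ → R) :
    ∑ p ∈ antidiagonal i, chebCoeff R i p * (p.1 * (p.2 + 1) * E (p.1 - 1) (p.2 + 1)) =
      -∑ p ∈ antidiagonal i, chebCoeff R i p * (p.2 ^ 2 * E p.1 p.2) := by
  rcases i with _ | m
  · simp
  rw [Nat.sum_antidiagonal_succ, Nat.sum_antidiagonal_succ']
  simp only [Nat.cast_zero, Nat.cast_add, Nat.cast_one, zero_mul, zero_tsub, mul_zero,
    add_tsub_cancel_right, zero_add, ne_eq, OfNat.ofNat_ne_zero, not_false_eq_true, zero_pow]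
  rw [← sum_neg_distrib]
  refine sum_congr rfl fun p hp => ?_
  linear_combination ((p.2 : R) + 1) * E p.1 (p.2 + 1) * chebCoeff_succ_fst_mul (R := R) hp

theorem sum_antidiagonal_chebCoeff_mul_shift_snd (i : ℕ) (E : ℕ → ℕ → R) :
    ∑ p ∈ antidiagonal i, chebCoeff R i p * (p.2 * (p.1 + 1) * E (p.1 + 1) (p.2 - 1)) =
      -∑ p ∈ antidiagonal i, chebCoeff R i p * (p.1 ^ 2 * E p.1 p.2) := by
  rcases i with _ | m
  · simp
  rw [Nat.sum_antidiagonal_succ', Nat.sum_antidiagonal_succ]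
  simp only [Nat.cast_zero, Nat.cast_add, Nat.cast_one, zero_mul, zero_tsub, mul_zero,
    add_tsub_cancel_right, zero_add, ne_eq, OfNat.ofNat_ne_zero, not_false_eq_true, zero_pow]
  rw [← sum_neg_distrib]
  refine sum_congr rfl fun p hp => ?_
  linear_combination ((p.1 : R) + 1) * E (p.1 + 1) p.2 * chebCoeff_succ_fst_mul (R := R) hp

theorem sum_antidiagonal_chebCoeff_mul_eigen (i : ℕ) (E : ℕ → ℕ → R) :
    ∑ p ∈ antidiagonal i, chebCoeff R i p *
        (-(p.1 + p.2 + 2 * p.1 * p.2) * E p.1 p.2 + p.1 * (p.2 + 1) * E (p.1 - 1) (p.2 + 1)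
          + p.2 * (p.1 + 1) * E (p.1 + 1) (p.2 - 1)) =
      -(i * (i + 1)) * ∑ p ∈ antidiagonal i, chebCoeff R i p * E p.1 p.2 := by
  have hP := sum_antidiagonal_chebCoeff_mul_shift_fst i E
  have hQ := sum_antidiagonal_chebCoeff_mul_shift_snd i E
  conv_lhs => enter [2, p]; rw [mul_add, mul_add]
  rw [sum_add_distrib, sum_add_distrib, hP, hQ, mul_sum, ← sum_neg_distrib, ← sum_neg_distrib,
    ← sum_add_distrib, ← sum_add_distrib]
  refine sum_congr rfl fun p hp => ?_
  have hi : (i : R) = p.1 + p.2 := by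
    rw [← HasAntidiagonal.mem_antidiagonal.mp hp]
    push_cast
    ring
  rw [hi]
  ring

/-- Twice `Lcl`, in the coordinates `u = x - 1`, `v = n - x`. -/
def LclUV (h : ℕ → ℕ → R) (u v : ℕ) : R :=
  (u + 1) * v * (h (u + 1) (v - 1) - h u v) + u * (v + 1) * (h (u - 1) (v + 1) - h u v)

theorem LclUV_choose_mul_choose (j k u v : ℕ) :
    LclUV (fun u v => (u.choose j * v.choose k : R)) u v =
      -(j + k + 2 * j * k) * (u.choose j * v.choose k : R)
        + j * (k + 1) * (u.choose (j - 1) * v.choose (k + 1) : R)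
        + k * (j + 1) * (u.choose (j + 1) * v.choose (k - 1) : R) := by
  have hu₁ := Nat.cast_succ_mul_choose (R := R) u j
  have hv₁ := Nat.cast_succ_mul_choose (R := R) v k
  have hu₂ := Nat.cast_mul_choose_pred (R := R) u j
  have hv₂ := Nat.cast_mul_choose_pred (R := R) v k
  have hu₃ := Nat.cast_choose_succ_right_eq (R := R) u j
  have hv₃ := Nat.cast_choose_succ_right_eq (R := R) v k
  unfold LclUV
  push_cast
  linear_combination (v * ((v - 1).choose k : R)) * hu₁
    + ((u + 1 + j) * (u.choose j : R) + j * u.choose (j - 1)) * hv₂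
    + ((u + 1 + j) * (u.choose j : R)) * hv₃
    + ((v + 1) * ((v + 1).choose k : R)) * hu₂
    + ((j + 1) * (u.choose (j + 1) : R)) * hv₁
    + ((v + 1 + k) * (v.choose k : R)) * hu₃

variable (R) in
/-- `γ⁽ⁱ⁾` in the coordinates `u = x - 1`, `v = n - x`, summed over `j + k = i`. -/
def cheb (i u v : ℕ) : R :=
  ∑ p ∈ antidiagonal i, chebCoeff R i p * (u.choose p.1 * v.choose p.2)

theorem LclUV_cheb (i u v : ℕ) : LclUV (cheb R i) u v = -(i * (i + 1)) * cheb R i u v := by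
  have hlin : LclUV (cheb R i) u v = ∑ p ∈ antidiagonal i,
      chebCoeff R i p * LclUV (fun u v => (u.choose p.1 * v.choose p.2 : R)) u v := by
    simp only [LclUV, cheb, ← sum_sub_distrib, mul_sum, ← sum_add_distrib]
    exact sum_congr rfl fun p _ => by ring
  simp only [hlin, LclUV_choose_mul_choose]
  exact sum_antidiagonal_chebCoeff_mul_eigen i fun a b => (u.choose a * v.choose b : R)

end

theorem gamP_eq_cheb (n i x : ℕ) : gamP n i x = cheb ℂ i (x - 1) (n - x) := by
  rw [cheb, Nat.sum_antidiagonal_eq_sum_range_succ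
    (fun j k => chebCoeff ℂ i (j, k) * ((x - 1).choose j * (n - x).choose k)) i]
  exact sum_congr rfl fun j _ => by rw [chebCoeff]; ring

theorem Lcl_eq_LclUV (n : ℕ) (h : ℕ → ℕ → ℂ) {x : ℕ} (hx : x ∈ Icc 1 n) :
    Lcl n (fun y => h (y - 1) (n - y)) x = LclUV h (x - 1) (n - x) / 2 := by
  obtain ⟨hx₁, hxn⟩ := mem_Icc.mp hx
  obtain ⟨u, rfl⟩ := Nat.exists_eq_add_of_le' hx₁
  obtain ⟨v, rfl⟩ := Nat.exists_eq_add_of_le hxn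
  simp only [Lcl, LclUV, Nat.add_sub_cancel, Nat.add_sub_cancel_left,
    show u + 1 + v - (u + 1 + 1) = v - 1 by omega, show u + 1 + v - u = v + 1 by omega]
  push_cast
  ring

theorem Lcl_gamP (n i : ℕ) {x : ℕ} (hx : x ∈ Icc 1 n) :
    Lcl n (gamP n i) x = -((i : ℂ) * (i + 1) / 2) * gamP n i x := by
  have h : gamP n i = fun y => cheb ℂ i (y - 1) (n - y) := funext (gamP_eq_cheb n i)
  rw [h, Lcl_eq_LclUV n _ hx, LclUV_cheb]
  ring

theorem Lcl_congr {n : ℕ} {f g : ℕ → ℂ} (hfg : ∀ y ∈ Icc 1 n, f y = g y) {x : ℕ}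
    (hx : x ∈ Icc 1 n) : Lcl n f x = Lcl n g x := by
  obtain ⟨hx₁, hxn⟩ := mem_Icc.mp hx
  have hup : (x : ℂ) * (n - x) * (f (x + 1) - g (x + 1)) = 0 := by
    rcases hxn.eq_or_lt with rfl | hlt
    · simp
    · rw [hfg (x + 1) (mem_Icc.mpr ⟨by omega, hlt⟩), sub_self, mul_zero]
  have hdown : ((x : ℂ) - 1) * (n - x + 1) * (f (x - 1) - g (x - 1)) = 0 := by
    rcases hx₁.eq_or_lt with rfl | hlt
    · simp
    · rw [hfg (x - 1) (mem_Icc.mpr ⟨by omega, by omega⟩), sub_self, mul_zero]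
  unfold Lcl
  linear_combination (1 / 2 : ℂ) * hup + (1 / 2 : ℂ) * hdown
    - (1 / 2 : ℂ) * (x * (n - x) + (x - 1) * (n - x + 1)) * hfg x hx

theorem Lcl_const_mul (n : ℕ) (c : ℂ) (f : ℕ → ℂ) (x : ℕ) :
    Lcl n (fun y => c * f y) x = c * Lcl n f x := by
  simp only [Lcl]
  ring

theorem Lcl_conj (n : ℕ) (f : ℕ → ℂ) (x : ℕ) :
    starRingEnd ℂ (Lcl n f x) = Lcl n (fun y => starRingEnd ℂ (f y)) x := by
  simp [Lcl, map_ofNat]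

theorem sum_mul_Lcl (n : ℕ) (φ ψ : ℕ → ℂ) :
    ∑ x ∈ Icc 1 n, φ x * Lcl n ψ x =
      -∑ k ∈ range n, (k * (n - k) / 2 : ℂ) * (φ (k + 1) - φ k) * (ψ (k + 1) - ψ k) := by
  set a : ℕ → ℂ := fun k => k * (n - k) / 2
  have hL : ∀ k, φ (k + 1) * Lcl n ψ (k + 1) = a (k + 1) * φ (k + 1) * (ψ (k + 2) - ψ (k + 1))
      + a k * φ (k + 1) * (ψ k - ψ (k + 1)) := fun k => by
    simp only [a, Lcl, Nat.add_sub_cancel]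
    push_cast
    ring
  set g : ℕ → ℂ := fun k => a k * φ k * (ψ (k + 1) - ψ k)
  have hshift : ∑ k ∈ range n, g (k + 1) = ∑ k ∈ range n, g k := by
    have h₀ : g 0 = 0 := by simp [g, a]
    have hn : g n = 0 := by simp [g, a]
    have := (sum_range_succ' g n).symm.trans (sum_range_succ g n)
    rwa [h₀, hn, add_zero, add_zero] at this
  rw [sum_Icc_one_eq_sum_range, sum_congr rfl fun k _ => hL k, sum_add_distrib, hshift,
    ← sum_add_distrib, ← sum_neg_distrib]
  exact sum_congr rfl fun k _ => by ring

theorem sum_mul_Lcl_comm (n : ℕ) (φ ψ : ℕ → ℂ) :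
    ∑ x ∈ Icc 1 n, φ x * Lcl n ψ x = ∑ x ∈ Icc 1 n, ψ x * Lcl n φ x := by
  rw [sum_mul_Lcl, sum_mul_Lcl]
  exact congrArg _ (sum_congr rfl fun k _ => by ring)

def restrictIcc (n : ℕ) : (ℕ → ℂ) →ₗ[ℂ] (Fin n → ℂ) :=
  LinearMap.funLeft ℂ ℂ fun x : Fin n => (x : ℕ) + 1

def LclMap (n : ℕ) : (ℕ → ℂ) →ₗ[ℂ] (ℕ → ℂ) where
  toFun := Lcl n
  map_add' f g := funext fun x => by simp only [Lcl, Pi.add_apply]; ring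
  map_smul' c f := funext (Lcl_const_mul n c f)

/-- `Lcl` on functions on `{1, …, n}`, indexed by `Fin n` through `x ↦ x + 1`; by `Lcl_congr` the
extension by zero does not matter. -/
def LclFin (n : ℕ) : Module.End ℂ (Fin n → ℂ) :=
  restrictIcc n ∘ₗ LclMap n ∘ₗ Function.ExtendByZero.linearMap ℂ fun x : Fin n => (x : ℕ) + 1

theorem LclFin_restrictIcc (n : ℕ) (f : ℕ → ℂ) :
    LclFin n (restrictIcc n f) = restrictIcc n (LclMap n f) := by
  have hinj : Function.Injective fun x : Fin n => (x : ℕ) + 1 :=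
    (add_left_injective 1).comp Fin.val_injective
  funext x
  refine Lcl_congr (fun y hy => ?_) (mem_Icc.mpr ⟨Nat.le_add_left 1 x, x.isLt⟩)
  obtain ⟨hy₁, hyn⟩ := mem_Icc.mp hy
  obtain ⟨k, rfl⟩ := Nat.exists_eq_add_of_le' hy₁
  exact hinj.extend_apply _ 0 (⟨k, by omega⟩ : Fin n)

theorem gamP_one_ne_zero {n i : ℕ} (hi : i < n) : gamP n i 1 ≠ 0 := by
  have h₁ : gamP n i 1 = (-1) ^ i * (n - 1).choose i := by
    rw [gamP, sum_eq_single_of_mem 0 (mem_range.mpr i.succ_pos)]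
    · simp
    · intro j _ hj
      simp [Nat.choose_eq_zero_of_lt (Nat.pos_of_ne_zero hj)]
  rw [h₁]
  exact mul_ne_zero (pow_ne_zero _ (neg_ne_zero.mpr one_ne_zero))
    (Nat.cast_ne_zero.mpr (Nat.choose_pos (by omega)).ne')

theorem restrictIcc_gamP_ne_zero {n i : ℕ} (hi : i < n) : restrictIcc n (gamP n i) ≠ 0 :=
  fun h => gamP_one_ne_zero hi (congrFun h ⟨0, by omega⟩)

theorem hasEigenvector_LclFin_gamP {n i : ℕ} (hi : i < n) :
    (LclFin n).HasEigenvector (-((i : ℂ) * (i + 1) / 2)) (restrictIcc n (gamP n i)) := by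
  refine ⟨Module.End.mem_eigenspace_iff.mpr ?_, restrictIcc_gamP_ne_zero hi⟩
  rw [LclFin_restrictIcc]
  funext x
  exact Lcl_gamP n i (mem_Icc.mpr ⟨Nat.le_add_left 1 x, x.isLt⟩)

theorem hasEigenvalue_LclFin_of_eigenfunction {n : ℕ} {F : ℕ → ℂ} {μ : ℂ}
    (hF : ∃ x ∈ Icc 1 n, F x ≠ 0) (hFμ : ∀ x ∈ Icc 1 n, Lcl n F x = μ * F x) :
    (LclFin n).HasEigenvalue μ := by
  obtain ⟨x₀, hx₀, hFx₀⟩ := hF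
  obtain ⟨hx₀₁, hx₀n⟩ := mem_Icc.mp hx₀
  refine Module.End.hasEigenvalue_of_hasEigenvector (x := restrictIcc n F) ⟨?_, fun h => ?_⟩
  · rw [Module.End.mem_eigenspace_iff, LclFin_restrictIcc]
    funext x
    exact hFμ _ (mem_Icc.mpr ⟨Nat.le_add_left 1 x, x.isLt⟩)
  · have := congrFun h ⟨x₀ - 1, by omega⟩
    simp only [restrictIcc, LinearMap.funLeft_apply, Nat.sub_add_cancel hx₀₁] at this
    exact hFx₀ this

end BirthDeath

open BirthDeath in
theorem birth_death_chebyshev_general (n : ℕ) :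
    (∀ i : ℕ, i < n → ∀ c : ℂ, c ≠ 0 → ∀ x ∈ Finset.Icc 1 n,
        Lcl n (fun y => c * gamP n i y) x = -((i : ℂ) * (i + 1) / 2) * (c * gamP n i x))
    ∧ LinearIndependent ℂ (fun i : Fin n => fun x : Fin n => gamP n i ((x : ℕ) + 1))
    ∧ Submodule.span ℂ
        (Set.range (fun i : Fin n => fun x : Fin n => gamP n i ((x : ℕ) + 1))) = ⊤
    ∧ (∀ f g : ℕ → ℂ,
        ∑ x ∈ Finset.Icc 1 n, (1 / (n : ℂ)) * (starRingEnd ℂ) (f x) * Lcl n g x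
          = ∑ x ∈ Finset.Icc 1 n, (1 / (n : ℂ)) * (starRingEnd ℂ) (Lcl n f x) * g x)
    ∧ (∀ μ : ℂ,
        (∃ F : ℕ → ℂ, (∃ x ∈ Finset.Icc 1 n, F x ≠ 0) ∧
          ∀ x ∈ Finset.Icc 1 n, Lcl n F x = -μ * F x)
        ↔ ∃ i : ℕ, i < n ∧ μ = (i : ℂ) * (i + 1) / 2) := by
  have hvec (i : Fin n) : (LclFin n).HasEigenvector (-((i : ℂ) * (i + 1) / 2))
      (restrictIcc n (gamP n i)) := hasEigenvector_LclFin_gamP i.isLt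
  have hli : LinearIndependent ℂ fun i : Fin n => restrictIcc n (gamP n i) :=
    Module.End.eigenvectors_linearIndependent' _ _
      (injective_neg_mul_succ_div_two.comp Fin.val_injective) _ hvec
  have hspan : Submodule.span ℂ (Set.range fun i : Fin n => restrictIcc n (gamP n i)) = ⊤ :=
    hli.span_eq_top_of_card_eq_finrank' (by simp)
  refine ⟨fun i _ c _ x hx => ?_, hli, hspan, fun f g => ?_, fun μ => ⟨?_, ?_⟩⟩
  · rw [Lcl_const_mul, Lcl_gamP n i hx]
    ring
  · simp only [mul_assoc, ← mul_sum, Lcl_conj]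
    rw [sum_mul_Lcl_comm n (fun y => starRingEnd ℂ (f y)) g]
    exact congrArg _ (sum_congr rfl fun x _ => mul_comm _ _)
  · rintro ⟨F, hF, hFμ⟩
    obtain ⟨i, hi⟩ := Module.End.exists_eq_of_hasEigenvalue_of_span_eq_top
      (fun i => (hvec i).apply_eq_smul) hspan (hasEigenvalue_LclFin_of_eigenfunction hF hFμ)
    exact ⟨i, i.isLt, by linear_combination hi⟩
  · rintro ⟨i, hi, rfl⟩
    exact ⟨gamP n i, ⟨1, mem_Icc.mpr ⟨le_rfl, Nat.one_le_of_lt hi⟩, gamP_one_ne_zero hi⟩,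
      fun x hx => Lcl_gamP n i hx⟩

/-- For the birth-death chain on `{1,...,n}`: the (arbitrarily normalized)
discrete Chebyshev polynomials `c·γ⁽ⁱ⁾`, `i = 0,...,n-1`, are eigenfunctions of
`-L_cl` with eigenvalues `i(i+1)/2`; they form a basis of `ℂⁿ`
(`ℂⁿ = ⊕ᵢ ℂγ⁽ⁱ⁾`); `L_cl` is reversible with respect to the uniform probability
on `{1,...,n}`; and the spectrum of `-L_cl` is exactly `{i(i+1)/2 : 0 ≤ i < n}`. -/
theorem birth_death_chebyshev (n : ℕ) (hn : 1 ≤ n) :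
    (∀ i : ℕ, i < n → ∀ c : ℂ, c ≠ 0 → ∀ x ∈ Finset.Icc 1 n,
        Lcl n (fun y => c * gamP n i y) x = -((i : ℂ) * (i + 1) / 2) * (c * gamP n i x))
    ∧ LinearIndependent ℂ (fun i : Fin n => fun x : Fin n => gamP n i ((x : ℕ) + 1))
    ∧ Submodule.span ℂ
        (Set.range (fun i : Fin n => fun x : Fin n => gamP n i ((x : ℕ) + 1))) = ⊤
    ∧ (∀ f g : ℕ → ℂ,
        ∑ x ∈ Finset.Icc 1 n, (1 / (n : ℂ)) * (starRingEnd ℂ) (f x) * Lcl n g x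
          = ∑ x ∈ Finset.Icc 1 n, (1 / (n : ℂ)) * (starRingEnd ℂ) (Lcl n f x) * g x)
    ∧ (∀ μ : ℂ,
        (∃ F : ℕ → ℂ, (∃ x ∈ Finset.Icc 1 n, F x ≠ 0) ∧
          ∀ x ∈ Finset.Icc 1 n, Lcl n F x = -μ * F x)
        ↔ ∃ i : ℕ, i < n ∧ μ = (i : ℂ) * (i + 1) / 2) :=
  birth_death_chebyshev_general n
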